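/- Let γ > 1 and v₋ > 0, and let p(v) = v^{-γ}, Q(v) = v^{1-γ}/(γ-1). There exist constants C > 0 and δ* > 0 such that for every δ with 0 < δ < δ* and every pair v, w > 0 satisfying |p(v) − p(w)| < δ and |p(w) − p(v₋)| < δ, one has Q(v|w) ≤ ( 1/(2γ · p(w)^{1+1/γ}) + Cδ ) · (p(v) − p(w))². -/

import Mathlib

open Real Set

noncomputable def Hfun (γ r q : ℝ) : ℝ :=
  (q ^ (1 - 1/γ) - r ^ (1 - 1/γ)) / (γ - 1) + r * (q ^ (-(1/γ)) - r ^ (-(1/γ)))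

noncomputable def H1fun (γ r q : ℝ) : ℝ :=
  (1/γ) * q ^ (-(1/γ)) - (r/γ) * q ^ (-(1 + 1/γ))

noncomputable def H2fun (γ r q : ℝ) : ℝ :=
  -(1/γ^2) * q ^ (-(1 + 1/γ)) + r * (γ + 1)/γ^2 * q ^ (-(2 + 1/γ))

lemma hasDerivAt_Hfun {γ r q : ℝ} (hγ : 1 < γ) (hq : 0 < q) :
    HasDerivAt (Hfun γ r) (H1fun γ r q) q := by
  have hγ0 : γ ≠ 0 := by linarith
  have hγ1 : γ - 1 ≠ 0 := by linarith
  have h1 : HasDerivAt (fun q : ℝ => q ^ (1 - 1/γ)) ((1 - 1/γ) * q ^ ((1 - 1/γ) - 1)) q :=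
    Real.hasDerivAt_rpow_const (Or.inl hq.ne')
  have h2 : HasDerivAt (fun q : ℝ => q ^ (-(1/γ))) ((-(1/γ)) * q ^ ((-(1/γ)) - 1)) q :=
    Real.hasDerivAt_rpow_const (Or.inl hq.ne')
  have h := ((h1.sub_const (r ^ (1 - 1/γ))).div_const (γ - 1)).add
    ((h2.sub_const (r ^ (-(1/γ)))).const_mul r)
  have heq : H1fun γ r q
      = (1 - 1/γ) * q ^ ((1 - 1/γ) - 1) / (γ - 1) + r * ((-(1/γ)) * q ^ ((-(1/γ)) - 1)) := by
    rw [show (1 - 1/γ) - 1 = -(1/γ) by ring, show (-(1/γ)) - 1 = -(1 + 1/γ) by ring]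
    unfold H1fun
    field_simp
    ring
  rw [heq]
  exact h

lemma hasDerivAt_H1fun {γ r q : ℝ} (hγ : 1 < γ) (hq : 0 < q) :
    HasDerivAt (H1fun γ r) (H2fun γ r q) q := by
  have hγ0 : γ ≠ 0 := by linarith
  have h1 : HasDerivAt (fun q : ℝ => q ^ (-(1/γ))) ((-(1/γ)) * q ^ ((-(1/γ)) - 1)) q :=
    Real.hasDerivAt_rpow_const (Or.inl hq.ne')
  have h2 : HasDerivAt (fun q : ℝ => q ^ (-(1 + 1/γ))) ((-(1 + 1/γ)) * q ^ ((-(1 + 1/γ)) - 1)) q :=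
    Real.hasDerivAt_rpow_const (Or.inl hq.ne')
  have h := (h1.const_mul (1/γ)).sub (h2.const_mul (r/γ))
  have heq : H2fun γ r q
      = (1/γ) * ((-(1/γ)) * q ^ ((-(1/γ)) - 1)) - (r/γ) * ((-(1 + 1/γ)) * q ^ ((-(1 + 1/γ)) - 1)) := by
    rw [show (-(1/γ)) - 1 = -(1 + 1/γ) by ring, show (-(1 + 1/γ)) - 1 = -(2 + 1/γ) by ring]
    unfold H2fun
    field_simp
    ring
  rw [heq]
  exact h

lemma Hfun_self {γ r : ℝ} : Hfun γ r r = 0 := by simp [Hfun]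

lemma H1fun_self {γ r : ℝ} (hγ : 1 < γ) (hr : 0 < r) : H1fun γ r r = 0 := by
  have hmul : r * r ^ (-(1 + 1/γ)) = r ^ (-(1/γ)) := by
    rw [show -(1/γ) = 1 + -(1 + 1/γ) by ring, Real.rpow_add hr, Real.rpow_one]
  unfold H1fun
  linear_combination (-(1/γ)) * hmul

lemma H2fun_self {γ r : ℝ} (hγ : 1 < γ) (hr : 0 < r) :
    H2fun γ r r = (1/γ) * r ^ (-(1 + 1/γ)) := by
  have hγ0 : γ ≠ 0 := by linarith
  have hmul : r * r ^ (-(2 + 1/γ)) = r ^ (-(1 + 1/γ)) := by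
    rw [show -(1 + 1/γ) = 1 + -(2 + 1/γ) by ring, Real.rpow_add hr, Real.rpow_one]
  have hinv : γ * γ⁻¹ = 1 := mul_inv_cancel₀ hγ0
  unfold H2fun
  linear_combination ((γ+1)/γ^2) * hmul + (γ⁻¹ * r ^ (-(1 + 1/γ))) * hinv

lemma rpow_lip {a α x y : ℝ} (ha : 0 < a) (hα : 0 < α) (hx : a ≤ x) (hy : a ≤ y) :
    |x ^ (-α) - y ^ (-α)| ≤ α * a ^ (-(α + 1)) * |x - y| := by
  have key := Convex.norm_image_sub_le_of_norm_hasDerivWithin_le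
    (f := fun t : ℝ => t ^ (-α)) (f' := fun t : ℝ => (-α) * t ^ (-α - 1)) (s := Set.Ici a) (C := α * a ^ (-(α + 1)))
    (fun t ht => (Real.hasDerivAt_rpow_const
      (Or.inl (ne_of_gt (lt_of_lt_of_le ha ht)))).hasDerivWithinAt)
    (fun t ht => by
      have ht0 : 0 < t := lt_of_lt_of_le ha ht
      have hle : t ^ (-α - 1) ≤ a ^ (-α - 1) :=
        Real.rpow_le_rpow_of_nonpos ha ht (by linarith)
      have hpos : (0:ℝ) ≤ t ^ (-α - 1) := (Real.rpow_pos_of_pos ht0 _).le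
      rw [Real.norm_eq_abs, abs_mul, abs_neg, abs_of_pos hα, abs_of_nonneg hpos,
        show -(α + 1) = -α - 1 by ring]
      exact mul_le_mul_of_nonneg_left hle hα.le)
    (convex_Ici a) (mem_Ici.2 hy) (mem_Ici.2 hx)
  simpa [Real.norm_eq_abs] using key

lemma main_aux {γ a K δ q r : ℝ} (hγ : 1 < γ) (ha : 0 < a) (hδ : 0 < δ)
    (hq : a ≤ q) (hr : a ≤ r)
    (hH2 : ∀ s, a ≤ s → |s - r| ≤ |q - r| →
      H2fun γ r s ≤ (1/γ) * r ^ (-(1 + 1/γ)) + K * δ) :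
    Hfun γ r q ≤ ((1/(2*γ)) * r ^ (-(1 + 1/γ)) + (K/2) * δ) * (q - r)^2 := by
  have hr0 : 0 < r := lt_of_lt_of_le ha hr
  set coef : ℝ := (1/(2*γ)) * r ^ (-(1 + 1/γ)) + (K/2) * δ with hcoef
  set g : ℝ → ℝ := fun s => coef * (s - r)^2 - Hfun γ r s with hg
  set g1 : ℝ → ℝ := fun s => 2 * coef * (s - r) - H1fun γ r s with hg1
  have hcoef2 : 2 * coef = (1/γ) * r ^ (-(1 + 1/γ)) + K * δ := by rw [hcoef]; ring
  have hgd : ∀ s : ℝ, 0 < s → HasDerivAt g (g1 s) s := by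
    intro s hs
    have h1 : HasDerivAt (fun s : ℝ => (s - r)^2) (2 * (s - r)) s := by
      simpa using ((hasDerivAt_id s).sub_const r).fun_pow 2
    have h : HasDerivAt (fun y => coef * (y - r) ^ 2 - Hfun γ r y) (coef * (2 * (s - r)) - H1fun γ r s) s :=
      (h1.const_mul coef).sub (hasDerivAt_Hfun (r := r) hγ hs)
    convert h using 1
    simp only [hg1]; ring
  have hg1d : ∀ s : ℝ, 0 < s → HasDerivAt g1 (2 * coef - H2fun γ r s) s := by
    intro s hs
    have h1 : HasDerivAt (fun s : ℝ => 2 * coef * (s - r)) (2 * coef) s := by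
      simpa using ((hasDerivAt_id s).sub_const r).const_mul (2 * coef)
    exact h1.sub (hasDerivAt_H1fun (r := r) hγ hs)
  have hg1r : g1 r = 0 := by
    simp only [hg1, sub_self, mul_zero, H1fun_self hγ hr0, zero_sub, neg_zero]
  have hgr : g r = 0 := by
    simp only [hg, sub_self, Hfun_self, zero_pow, mul_zero, sub_zero]
    norm_num
  have key : 0 ≤ g q := by
    rcases le_total r q with hrq | hqr
    · -- r ≤ q
      have hmono1 : MonotoneOn g1 (Icc r q) := by
        apply monotoneOn_of_deriv_nonneg (convex_Icc r q)
        · intro s hs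
          exact ((hg1d s (lt_of_lt_of_le hr0 hs.1)).continuousAt).continuousWithinAt
        · intro s hs
          rw [interior_Icc] at hs
          exact ((hg1d s (lt_of_lt_of_le hr0 hs.1.le)).differentiableAt).differentiableWithinAt
        · intro s hs
          rw [interior_Icc] at hs
          have hs0 : 0 < s := lt_of_lt_of_le hr0 hs.1.le
          rw [(hg1d s hs0).deriv]
          have := hH2 s (le_trans hr hs.1.le) (by
            rw [abs_of_nonneg (by linarith [hs.1] : (0:ℝ) ≤ s - r),
              abs_of_nonneg (by linarith : (0:ℝ) ≤ q - r)]
            linarith [hs.2])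
          rw [hcoef2]; linarith
      have hg1nn : ∀ s ∈ Icc r q, 0 ≤ g1 s := by
        intro s hs
        have := hmono1 ⟨le_refl r, hrq⟩ hs hs.1
        linarith [hg1r ▸ this]
      have hmono : MonotoneOn g (Icc r q) := by
        apply monotoneOn_of_deriv_nonneg (convex_Icc r q)
        · intro s hs
          exact ((hgd s (lt_of_lt_of_le hr0 hs.1)).continuousAt).continuousWithinAt
        · intro s hs
          rw [interior_Icc] at hs
          exact ((hgd s (lt_of_lt_of_le hr0 hs.1.le)).differentiableAt).differentiableWithinAt
        · intro s hs
          rw [interior_Icc] at hs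
          rw [(hgd s (lt_of_lt_of_le hr0 hs.1.le)).deriv]
          exact hg1nn s ⟨hs.1.le, hs.2.le⟩
      have := hmono ⟨le_refl r, hrq⟩ ⟨hrq, le_refl q⟩ hrq
      linarith [hgr ▸ this]
    · -- q ≤ r
      have hq0 : 0 < q := lt_of_lt_of_le ha hq
      have hmono1 : MonotoneOn g1 (Icc q r) := by
        apply monotoneOn_of_deriv_nonneg (convex_Icc q r)
        · intro s hs
          exact ((hg1d s (lt_of_lt_of_le hq0 hs.1)).continuousAt).continuousWithinAt
        · intro s hs
          rw [interior_Icc] at hs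
          exact ((hg1d s (lt_of_lt_of_le hq0 hs.1.le)).differentiableAt).differentiableWithinAt
        · intro s hs
          rw [interior_Icc] at hs
          have hs0 : 0 < s := lt_of_lt_of_le hq0 hs.1.le
          rw [(hg1d s hs0).deriv]
          have := hH2 s (le_trans hq hs.1.le) (by
            rw [abs_of_nonpos (by linarith [hs.2] : s - r ≤ 0),
              abs_of_nonpos (by linarith : q - r ≤ 0)]
            linarith [hs.1])
          rw [hcoef2]; linarith
      have hg1np : ∀ s ∈ Icc q r, g1 s ≤ 0 := by
        intro s hs
        have := hmono1 hs ⟨hqr, le_refl r⟩ hs.2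
        linarith [hg1r ▸ this]
      have hanti : AntitoneOn g (Icc q r) := by
        apply antitoneOn_of_deriv_nonpos (convex_Icc q r)
        · intro s hs
          exact ((hgd s (lt_of_lt_of_le hq0 hs.1)).continuousAt).continuousWithinAt
        · intro s hs
          rw [interior_Icc] at hs
          exact ((hgd s (lt_of_lt_of_le hq0 hs.1.le)).differentiableAt).differentiableWithinAt
        · intro s hs
          rw [interior_Icc] at hs
          rw [(hgd s (lt_of_lt_of_le hq0 hs.1.le)).deriv]
          exact hg1np s ⟨hs.1.le, hs.2.le⟩
      have := hanti ⟨le_refl q, hqr⟩ ⟨hqr, le_refl r⟩ hqr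
      linarith [hgr ▸ this]
  simp only [hg] at key
  linarith

/-- Upper bound on the relative internal energy: for `γ > 1`, `v₋ > 0`,
`p(v) = v^(-γ)`, `Q(v|w) = (v^(1-γ) - w^(1-γ))/(γ-1) + w^(-γ)(v-w)`, there are
`C, δ* > 0` such that for `0 < δ < δ*` and `v, w > 0` with `|p(v)-p(w)| < δ`,
`|p(w)-p(v₋)| < δ`:
`Q(v|w) ≤ (1/(2γ p(w)^(1+1/γ)) + Cδ)(p(v)-p(w))²`. -/
theorem stmt_5 (γ vminus : ℝ) (hγ : 1 < γ) (hv : 0 < vminus) :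
    ∃ C > 0, ∃ δstar > 0, ∀ δ : ℝ, 0 < δ → δ < δstar →
      ∀ v w : ℝ, 0 < v → 0 < w →
        |v ^ (-γ) - w ^ (-γ)| < δ → |w ^ (-γ) - vminus ^ (-γ)| < δ →
        (v ^ (1 - γ) - w ^ (1 - γ)) / (γ - 1) + w ^ (-γ) * (v - w)
          ≤ (1 / (2 * γ * (w ^ (-γ)) ^ (1 + 1 / γ)) + C * δ)
              * (v ^ (-γ) - w ^ (-γ)) ^ 2 := by
  have hγ0 : (0:ℝ) < γ := by linarith
  have hγne : γ ≠ 0 := hγ0.ne'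
  set r₀ : ℝ := vminus ^ (-γ) with hr₀def
  have hr₀ : 0 < r₀ := Real.rpow_pos_of_pos hv _
  set a : ℝ := r₀ / 2 with hadef
  have ha : 0 < a := by rw [hadef]; positivity
  set K : ℝ := (1/γ^2) * ((1 + 1/γ) * a ^ (-((1 + 1/γ) + 1)))
    + (2 * r₀ * (γ + 1)/γ^2) * ((2 + 1/γ) * a ^ (-((2 + 1/γ) + 1))) with hKdef
  have hK : 0 < K := by
    rw [hKdef]
    have h1 : (0:ℝ) < (1/γ^2) * ((1 + 1/γ) * a ^ (-((1 + 1/γ) + 1))) := by positivity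
    have h2 : (0:ℝ) < (2 * r₀ * (γ + 1)/γ^2) * ((2 + 1/γ) * a ^ (-((2 + 1/γ) + 1))) := by
      positivity
    linarith
  refine ⟨K/2, by positivity, r₀/4, by positivity, ?_⟩
  intro δ hδ hδs v w hv' hw' h1 h2
  set q : ℝ := v ^ (-γ) with hqdef
  set r : ℝ := w ^ (-γ) with hrdef
  have hq0 : 0 < q := Real.rpow_pos_of_pos hv' _
  have hr0 : 0 < r := Real.rpow_pos_of_pos hw' _
  have hqr := abs_sub_lt_iff.1 h1
  have hrr0 := abs_sub_lt_iff.1 h2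
  have har : a ≤ r := by rw [hadef]; linarith [hrr0.2]
  have hrb : r ≤ 2 * r₀ := by linarith [hrr0.1]
  have haq : a ≤ q := by rw [hadef]; linarith [hqr.2, hrr0.2]
  have hH2 : ∀ s, a ≤ s → |s - r| ≤ |q - r| →
      H2fun γ r s ≤ (1/γ) * r ^ (-(1 + 1/γ)) + K * δ := by
    intro s has hsr
    have hs0 : 0 < s := lt_of_lt_of_le ha has
    have hsd : |s - r| < δ := lt_of_le_of_lt hsr h1
    have lip1 := rpow_lip (α := 1 + 1/γ) ha (by positivity) has har
    have lip2 := rpow_lip (α := 2 + 1/γ) ha (by positivity) has har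
    have e1 : r ^ (-(1 + 1/γ)) - s ^ (-(1 + 1/γ))
        ≤ (1 + 1/γ) * a ^ (-((1 + 1/γ) + 1)) * δ := by
      calc r ^ (-(1 + 1/γ)) - s ^ (-(1 + 1/γ))
          ≤ |s ^ (-(1 + 1/γ)) - r ^ (-(1 + 1/γ))| := by
            rw [abs_sub_comm]; exact le_abs_self _
        _ ≤ (1 + 1/γ) * a ^ (-((1 + 1/γ) + 1)) * |s - r| := lip1
        _ ≤ (1 + 1/γ) * a ^ (-((1 + 1/γ) + 1)) * δ :=
            mul_le_mul_of_nonneg_left hsd.le (by positivity)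
    have e2 : s ^ (-(2 + 1/γ)) - r ^ (-(2 + 1/γ))
        ≤ (2 + 1/γ) * a ^ (-((2 + 1/γ) + 1)) * δ := by
      calc s ^ (-(2 + 1/γ)) - r ^ (-(2 + 1/γ))
          ≤ |s ^ (-(2 + 1/γ)) - r ^ (-(2 + 1/γ))| := le_abs_self _
        _ ≤ (2 + 1/γ) * a ^ (-((2 + 1/γ) + 1)) * |s - r| := lip2
        _ ≤ (2 + 1/γ) * a ^ (-((2 + 1/γ) + 1)) * δ :=
            mul_le_mul_of_nonneg_left hsd.le (by positivity)
    have hdiff : H2fun γ r s - H2fun γ r r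
        = (1/γ^2) * (r ^ (-(1 + 1/γ)) - s ^ (-(1 + 1/γ)))
          + (r * (γ + 1)/γ^2) * (s ^ (-(2 + 1/γ)) - r ^ (-(2 + 1/γ))) := by
      unfold H2fun; ring
    have t1 : (1/γ^2) * (r ^ (-(1 + 1/γ)) - s ^ (-(1 + 1/γ)))
        ≤ (1/γ^2) * ((1 + 1/γ) * a ^ (-((1 + 1/γ) + 1)) * δ) :=
      mul_le_mul_of_nonneg_left e1 (by positivity)
    have t2 : (r * (γ + 1)/γ^2) * (s ^ (-(2 + 1/γ)) - r ^ (-(2 + 1/γ)))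
        ≤ (2 * r₀ * (γ + 1)/γ^2) * ((2 + 1/γ) * a ^ (-((2 + 1/γ) + 1)) * δ) := by
      calc (r * (γ + 1)/γ^2) * (s ^ (-(2 + 1/γ)) - r ^ (-(2 + 1/γ)))
          ≤ (r * (γ + 1)/γ^2) * ((2 + 1/γ) * a ^ (-((2 + 1/γ) + 1)) * δ) :=
            mul_le_mul_of_nonneg_left e2 (by positivity)
        _ ≤ (2 * r₀ * (γ + 1)/γ^2) * ((2 + 1/γ) * a ^ (-((2 + 1/γ) + 1)) * δ) := by
            apply mul_le_mul_of_nonneg_right _ (by positivity)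
            apply div_le_div_of_nonneg_right ?_ (by positivity)
            · exact mul_le_mul_of_nonneg_right hrb (by linarith)
    have hKδ : (1/γ^2) * ((1 + 1/γ) * a ^ (-((1 + 1/γ) + 1)) * δ)
        + (2 * r₀ * (γ + 1)/γ^2) * ((2 + 1/γ) * a ^ (-((2 + 1/γ) + 1)) * δ) = K * δ := by
      rw [hKdef]; ring
    have hself := H2fun_self (r := r) hγ hr0
    linarith
  have main := main_aux hγ ha hδ haq har hH2
  unfold Hfun at main
  have ev : q ^ (1 - 1/γ) = v ^ (1 - γ) := by
    rw [hqdef, ← Real.rpow_mul hv'.le, show (-γ) * (1 - 1/γ) = 1 - γ by field_simp; ring]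
  have ew : r ^ (1 - 1/γ) = w ^ (1 - γ) := by
    rw [hrdef, ← Real.rpow_mul hw'.le, show (-γ) * (1 - 1/γ) = 1 - γ by field_simp; ring]
  have ev2 : q ^ (-(1/γ)) = v := by
    rw [hqdef, ← Real.rpow_mul hv'.le, show (-γ) * (-(1/γ)) = 1 by field_simp, Real.rpow_one]
  have ew2 : r ^ (-(1/γ)) = w := by
    rw [hrdef, ← Real.rpow_mul hw'.le, show (-γ) * (-(1/γ)) = 1 by field_simp, Real.rpow_one]
  have ec : (1:ℝ) / (2 * γ * r ^ (1 + 1/γ)) = (1/(2*γ)) * r ^ (-(1 + 1/γ)) := by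
    rw [Real.rpow_neg hr0.le]; ring
  rw [← ev, ← ew, ← ev2, ← ew2, ec]
  exact main
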